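/- Let G be a graph, H obtained from G by substituting complete graphs C_1,...,C_n for the vertices v_1,...,v_n of G, and let H' be a minimal chordal completion of H. Then for every i and every x, y ∈ C_i, we have N_{H'}(x) ∪ {x} = N_{H'}(y) ∪ {y}; in particular, H' is itself obtained from some graph on {v_1,...,v_n} by substituting the cliques C_1,...,C_n. -/

import Mathlib

open SimpleGraph

/-- `f : ZMod n → V` traces an induced cycle of length `n` in `G`:
`f` is injective and adjacency holds exactly between consecutive vertices. -/
def IsInducedCycle {V : Type*} (G : SimpleGraph V) (n : ℕ) (f : ZMod n → V) : Prop :=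
  Function.Injective f ∧ ∀ i j : ZMod n, G.Adj (f i) (f j) ↔ (j = i + 1 ∨ i = j + 1)

/-- A graph is chordal if it has no induced cycle of length at least 4. -/
def Chordal {V : Type*} (G : SimpleGraph V) : Prop :=
  ∀ n, 4 ≤ n → ∀ f : ZMod n → V, ¬ IsInducedCycle G n f

/-- `G'` is a chordal completion of `G`. -/
def ChordalCompletion {V : Type*} (G G' : SimpleGraph V) : Prop :=
  Chordal G' ∧ G ≤ G'

/-- Minimal chordal completion: no proper spanning subgraph containing `G` is chordal. -/
def MinimalChordalCompletion {V : Type*} (G G' : SimpleGraph V) : Prop :=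
  ChordalCompletion G G' ∧ ∀ H, ChordalCompletion G H → H ≤ G' → H = G'

/-- The graph obtained from `G` by substituting, for each vertex `i`,
the complete graph on `C i`. -/
def blowup {V : Type*} (G : SimpleGraph V) (C : V → Type*) :
    SimpleGraph (Σ i, C i) where
  Adj x y := G.Adj x.1 y.1 ∨ (x.1 = y.1 ∧ x ≠ y)
  symm := by
    constructor
    rintro x y (h | ⟨h1, h2⟩)
    · exact Or.inl h.symm
    · exact Or.inr ⟨h1.symm, h2.symm⟩
  loopless := by
    constructor
    rintro x (h | ⟨_, h2⟩)
    · exact G.irrefl h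
    · exact h2 rfl

/-!
Vertices `x`, `y` of one block are adjacent twins of `H`: `N_H[x] = N_H[y]`. Deleting from a
chordal completion `H'` the edges from `x` to vertices outside `N_{H'}[y]` keeps it chordal and
keeps it above `H`, so in a minimal completion nothing is deleted, i.e. `N_{H'}[x] ⊆ N_{H'}[y]`.
Equal closed neighbourhoods inside every block then make `H'` itself a substitution.
-/

theorem ZMod.eq_add_one_iff_val {n : ℕ} [NeZero n] (i j : ZMod n) :
    j = i + 1 ↔ j.val = i.val + 1 ∨ (i.val + 1 = n ∧ j.val = 0) := by
  rw [← (ZMod.val_injective n).eq_iff, ZMod.val_add, ZMod.val_one_eq_one_mod]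
  have := i.val_lt
  have := j.val_lt
  rcases (show n = 1 ∨ 1 < n by omega) with rfl | hn
  · simp only [Nat.mod_one]
    omega
  · rw [Nat.mod_eq_of_lt hn]
    rcases (show i.val + 1 < n ∨ i.val + 1 = n by omega) with h | h
    · rw [Nat.mod_eq_of_lt h]
      omega
    · rw [h, Nat.mod_self]
      omega

section InducedCycle

variable {W : Type*} {G : SimpleGraph W}

theorem IsInducedCycle.comp_add {n : ℕ} {f : ZMod n → W} (hf : IsInducedCycle G n f)
    (k : ZMod n) : IsInducedCycle G n (fun i => f (i + k)) := by
  refine ⟨fun i j hij => add_right_cancel (hf.1 hij), fun i j => ?_⟩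
  rw [hf.2, add_right_comm i, add_right_comm j, add_left_inj, add_left_inj]

theorem IsInducedCycle.adj_iff_val {n : ℕ} [NeZero n] {f : ZMod n → W}
    (hf : IsInducedCycle G n f) (i j : ZMod n) :
    G.Adj (f i) (f j) ↔ j.val = i.val + 1 ∨ i.val = j.val + 1 ∨
      (i.val + 1 = n ∧ j.val = 0) ∨ (j.val + 1 = n ∧ i.val = 0) := by
  rw [hf.2, ZMod.eq_add_one_iff_val, ZMod.eq_add_one_iff_val]
  tauto

end InducedCycle

/-- Only `g 0, …, g m` are constrained: they form an induced path in `G`, in this order. -/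
def IsInducedPath {W : Type*} (G : SimpleGraph W) (m : ℕ) (g : ℕ → W) : Prop :=
  Set.InjOn g (Set.Iic m) ∧
    ∀ s ≤ m, ∀ t ≤ m, G.Adj (g s) (g t) ↔ (t = s + 1 ∨ s = t + 1)

namespace IsInducedPath

variable {W : Type*} {G : SimpleGraph W} {m : ℕ} {g : ℕ → W}

theorem mono (hg : IsInducedPath G m g) {m' : ℕ} (hm' : m' ≤ m) : IsInducedPath G m' g :=
  ⟨hg.1.mono (Set.Iic_subset_Iic.2 hm'),
    fun s hs t ht => hg.2 s (hs.trans hm') t (ht.trans hm')⟩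

theorem shift (hg : IsInducedPath G m g) {k : ℕ} (hk : k ≤ m) :
    IsInducedPath G (m - k) (fun s => g (s + k)) := by
  refine ⟨fun s hs t ht hst => ?_, fun s hs t ht => ?_⟩
  · simp only [Set.mem_Iic] at hs ht
    have := hg.1 (Set.mem_Iic.2 (by omega)) (Set.mem_Iic.2 (by omega)) hst
    omega
  · rw [hg.2 _ (by omega) _ (by omega)]
    omega

theorem isInducedCycle_cons (hg : IsInducedPath G m g) {b : W} (hb : ∀ s ≤ m, g s ≠ b)
    (hadj : ∀ s ≤ m, G.Adj b (g s) ↔ s = 0 ∨ s = m) :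
    IsInducedCycle G (m + 2) (fun k => if k.val = 0 then b else g (k.val - 1)) := by
  constructor
  · intro i j hij
    rw [← (ZMod.val_injective _).eq_iff]
    have := i.val_lt
    have := j.val_lt
    simp only at hij
    split_ifs at hij with hi hj hj
    · omega
    · exact absurd hij.symm (hb _ (by omega))
    · exact absurd hij (hb _ (by omega))
    · have := hg.1 (Set.mem_Iic.2 (by omega)) (Set.mem_Iic.2 (by omega)) hij
      omega
  · intro i j
    rw [ZMod.eq_add_one_iff_val, ZMod.eq_add_one_iff_val]
    have := i.val_lt
    have := j.val_lt
    simp only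
    split_ifs with hi hj hj
    · simp only [SimpleGraph.irrefl, false_iff]
      omega
    · rw [hadj _ (by omega)]
      omega
    · rw [G.adj_comm, hadj _ (by omega)]
      omega
    · rw [hg.2 _ (by omega) _ (by omega)]
      omega

end IsInducedPath

namespace IsInducedCycle

variable {W : Type*} {G : SimpleGraph W} {n : ℕ} {f : ZMod n → W}

theorem isInducedPath (hf : IsInducedCycle G n f) (hn : 2 ≤ n) :
    IsInducedPath G (n - 2) (fun s => f (s + 1 : ℕ)) := by
  have : NeZero n := ⟨by omega⟩
  refine ⟨fun s hs t ht hst => ?_, fun s hs t ht => ?_⟩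
  · simp only [Set.mem_Iic] at hs ht
    have := congrArg ZMod.val (hf.1 hst)
    rw [ZMod.val_cast_of_lt (by omega), ZMod.val_cast_of_lt (by omega)] at this
    omega
  · rw [hf.adj_iff_val, ZMod.val_cast_of_lt (by omega), ZMod.val_cast_of_lt (by omega)]
    omega

theorem apply_zero_ne (hf : IsInducedCycle G n f) (hn : 2 ≤ n) {s : ℕ} (hs : s ≤ n - 2) :
    f (s + 1 : ℕ) ≠ f 0 := by
  have : NeZero n := ⟨by omega⟩
  intro h
  have := congrArg ZMod.val (hf.1 h)
  rw [ZMod.val_cast_of_lt (by omega), ZMod.val_zero] at this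
  omega

theorem adj_apply_zero_iff (hf : IsInducedCycle G n f) (hn : 2 ≤ n) {s : ℕ} (hs : s ≤ n - 2) :
    G.Adj (f 0) (f (s + 1 : ℕ)) ↔ s = 0 ∨ s = n - 2 := by
  have : NeZero n := ⟨by omega⟩
  rw [hf.adj_iff_val, ZMod.val_cast_of_lt (by omega), ZMod.val_zero]
  omega

end IsInducedCycle

section Chordal

variable {W : Type*} {G : SimpleGraph W} {m : ℕ} {g : ℕ → W}

theorem Chordal.le_one_of_isInducedPath (hG : Chordal G) (hg : IsInducedPath G m g) {b : W}
    (hb : ∀ s ≤ m, g s ≠ b) (hadj : ∀ s ≤ m, G.Adj b (g s) ↔ s = 0 ∨ s = m) :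
    m ≤ 1 := by
  by_contra! hm
  exact hG (m + 2) (by omega) _ (hg.isInducedCycle_cons hb hadj)

/-- In a chordal graph, a vertex adjacent to both ends of an induced path is adjacent to all of
it: otherwise two consecutive neighbours on the path close an induced cycle of length `≥ 4`. -/
theorem Chordal.adj_of_isInducedPath (hG : Chordal G) (hg : IsInducedPath G m g) {b : W}
    (hb : ∀ s ≤ m, g s ≠ b) (h0 : G.Adj b (g 0)) (hm : G.Adj b (g m)) :
    ∀ s ≤ m, G.Adj b (g s) := by
  induction m using Nat.strong_induction_on generalizing g with
  | _ m ih =>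
  by_cases hmid : ∃ k, 0 < k ∧ k < m ∧ G.Adj b (g k)
  · obtain ⟨k, hk0, hkm, hk⟩ := hmid
    intro s hs
    rcases le_total s k with hsk | hks
    · exact ih k hkm (hg.mono hkm.le) (fun t ht => hb t (ht.trans hkm.le)) h0 hk s hsk
    · have := ih (m - k) (by omega) (hg.shift hkm.le) (fun t ht => hb _ (by omega))
        (by simpa using hk) (by rwa [Nat.sub_add_cancel hkm.le]) (s - k) (by omega)
      rwa [Nat.sub_add_cancel hks] at this
  · push Not at hmid
    have hm1 : m ≤ 1 := hG.le_one_of_isInducedPath hg hb fun s hs =>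
      ⟨fun h => by by_contra hne; exact hmid s (by omega) (by omega) h,
        by rintro (rfl | rfl) <;> assumption⟩
    intro s hs
    obtain rfl | rfl : s = 0 ∨ s = m := by omega
    exacts [h0, hm]

end Chordal

namespace SimpleGraph

variable {W : Type*}

def shrinkNbhd (H : SimpleGraph W) (a b : W) : SimpleGraph W where
  Adj u v := H.Adj u v ∧ (u = a → v ∈ H.neighborSet b ∪ {b}) ∧
    (v = a → u ∈ H.neighborSet b ∪ {b})
  symm := ⟨fun _ _ ⟨h, hu, hv⟩ => ⟨h.symm, hv, hu⟩⟩
  loopless := ⟨fun u h => H.loopless.irrefl u h.1⟩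

variable {H : SimpleGraph W} {a b u v : W}

theorem shrinkNbhd_le (H : SimpleGraph W) (a b : W) : H.shrinkNbhd a b ≤ H :=
  fun _ _ h => h.1

theorem shrinkNbhd_adj_of_ne (hu : u ≠ a) (hv : v ≠ a) :
    (H.shrinkNbhd a b).Adj u v ↔ H.Adj u v :=
  ⟨fun h => h.1, fun h => ⟨h, fun h' => absurd h' hu, fun h' => absurd h' hv⟩⟩

theorem shrinkNbhd_adj_of_mem (hu : u ∈ H.neighborSet b ∪ {b})
    (hv : v ∈ H.neighborSet b ∪ {b}) : (H.shrinkNbhd a b).Adj u v ↔ H.Adj u v :=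
  ⟨fun h => h.1, fun h => ⟨h, fun _ => hv, fun _ => hu⟩⟩

theorem shrinkNbhd_adj_self (hab : H.Adj a b) : (H.shrinkNbhd a b).Adj a b :=
  (shrinkNbhd_adj_of_mem (Or.inl hab.symm) (Or.inr rfl)).2 hab

theorem Adj.of_neighborSet_union_eq {u' : W}
    (huv : H.Adj u v) (h : H.neighborSet u ∪ {u} = H.neighborSet u' ∪ {u'}) (hv : v ≠ u') :
    H.Adj u' v :=
  ((h ▸ Or.inl huv : v ∈ H.neighborSet u' ∪ {u'})).resolve_right hv

end SimpleGraph

/-- An induced cycle through `a` in the shrunk graph leaves an induced path of `H` whose ends lie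
in `N[b]`: either `b` is an end and then the two ends are adjacent, or `b` sees the whole path
and then the cycle was already induced in `H`. -/
theorem Chordal.shrinkNbhd {W : Type*} {H : SimpleGraph W} (hH : Chordal H) {a b : W}
    (hab : H.Adj a b) : Chordal (H.shrinkNbhd a b) := by
  intro n hn f hf
  have : NeZero n := ⟨by omega⟩
  by_cases ha : a ∈ Set.range f
  swap
  · refine hH n hn f ⟨hf.1, fun i j => ?_⟩
    rw [← shrinkNbhd_adj_of_ne (fun h => ha ⟨i, h⟩) (fun h => ha ⟨j, h⟩), hf.2]
  obtain ⟨k, hk⟩ := ha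
  have hf' := hf.comp_add k
  set g : ℕ → W := fun s => f ((s + 1 : ℕ) + k)
  have hga : ∀ s ≤ n - 2, g s ≠ a := fun s hs => by
    simpa [g, hk] using hf'.apply_zero_ne (by omega) hs
  have hSa : ∀ s ≤ n - 2, (H.shrinkNbhd a b).Adj a (g s) ↔ s = 0 ∨ s = n - 2 :=
    fun s hs => by simpa [g, hk] using hf'.adj_apply_zero_iff (by omega) hs
  have hgH : IsInducedPath H (n - 2) g := by
    obtain ⟨hinj, hadj⟩ := hf'.isInducedPath (by omega)
    refine ⟨hinj, fun s hs t ht => ?_⟩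
    rw [← shrinkNbhd_adj_of_ne (hga s hs) (hga t ht)]
    exact hadj s hs t ht
  have hend : ∀ s ≤ n - 2, s = 0 ∨ s = n - 2 → g s ∈ H.neighborSet b ∪ {b} :=
    fun s hs hs' => ((hSa s hs).2 hs').2.1 rfl
  by_cases hb : ∃ s ≤ n - 2, g s = b
  · obtain ⟨s, hs, rfl⟩ := hb
    have hs' := (hSa s hs).1 (shrinkNbhd_adj_self hab)
    rcases hend (n - 2 - s) (by omega) (by omega) with h | h
    · have := (hgH.2 s hs (n - 2 - s) (by omega)).1 h
      omega
    · have := hgH.1 (Set.mem_Iic.2 (by omega)) (Set.mem_Iic.2 hs) h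
      omega
  push Not at hb
  have hbg (s : ℕ) (hs : s ≤ n - 2) (hs' : s = 0 ∨ s = n - 2) : H.Adj b (g s) :=
    (hend s hs hs').resolve_right (hb s hs)
  have hfan := hH.adj_of_isInducedPath hgH hb (hbg 0 (by omega) (by omega))
    (hbg (n - 2) le_rfl (by omega))
  have hHa : ∀ s ≤ n - 2, H.Adj a (g s) ↔ s = 0 ∨ s = n - 2 := fun s hs => by
    rw [← hSa s hs, shrinkNbhd_adj_of_mem (Or.inl hab.symm) (Or.inl (hfan s hs))]
  have := hH.le_one_of_isInducedPath hgH hga hHa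
  omega

theorem MinimalChordalCompletion.neighborSet_subset {W : Type*} {G H : SimpleGraph W}
    (h : MinimalChordalCompletion G H) {a b : W} (hab : G.Adj a b)
    (hN : G.neighborSet a ⊆ G.neighborSet b ∪ {b}) :
    H.neighborSet a ⊆ H.neighborSet b ∪ {b} := by
  have hGH : G ≤ H := h.1.2
  have hlift {v : W} (hv : v ∈ G.neighborSet b ∪ {b}) : v ∈ H.neighborSet b ∪ {b} :=
    hv.imp_left (fun h => hGH h)
  have hGS : G ≤ H.shrinkNbhd a b := fun u v huv =>
    ⟨hGH huv, fun hu => hlift (hN (hu ▸ huv)), fun hv => hlift (hN (hv ▸ huv.symm))⟩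
  have hS : H.shrinkNbhd a b = H :=
    h.2 _ ⟨h.1.1.shrinkNbhd (hGH hab), hGS⟩ (H.shrinkNbhd_le a b)
  intro v hv
  have hv' : (H.shrinkNbhd a b).Adj a v := by rw [hS]; exact hv
  exact hv'.2.1 rfl

theorem blowup_neighborSet_subset {V : Type*} (G : SimpleGraph V) (C : V → Type*)
    {a b : Σ i, C i} (hab : a.1 = b.1) :
    (blowup G C).neighborSet a ⊆ (blowup G C).neighborSet b ∪ {b} := by
  intro v hv
  by_cases hvb : v = b
  · exact Or.inr hvb
  rcases hv with h | ⟨h, -⟩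
  · exact Or.inl (Or.inl (hab ▸ h))
  · exact Or.inl (Or.inr ⟨hab ▸ h, Ne.symm hvb⟩)

theorem MinimalChordalCompletion.blowup_neighborSet_union_subset {V : Type*} {G : SimpleGraph V}
    {C : V → Type*} {H : SimpleGraph (Σ i, C i)} (h : MinimalChordalCompletion (blowup G C) H)
    (i : V) (x y : C i) :
    H.neighborSet ⟨i, x⟩ ∪ {⟨i, x⟩} ⊆ H.neighborSet ⟨i, y⟩ ∪ {⟨i, y⟩} := by
  by_cases hxy : x = y
  · rw [hxy]
  have hadj : (blowup G C).Adj ⟨i, x⟩ ⟨i, y⟩ := Or.inr ⟨rfl, by simpa using hxy⟩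
  refine Set.union_subset (h.neighborSet_subset hadj (blowup_neighborSet_subset G C rfl)) ?_
  rintro _ rfl
  exact Or.inl (h.1.2 hadj).symm

theorem exists_eq_blowup_of_neighborSet_union_eq {V : Type*} {C : V → Type*}
    {H : SimpleGraph (Σ i, C i)}
    (hN : ∀ (i : V) (x y : C i),
      H.neighborSet ⟨i, x⟩ ∪ {⟨i, x⟩} = H.neighborSet ⟨i, y⟩ ∪ {⟨i, y⟩}) :
    ∃ G' : SimpleGraph V, H = blowup G' C := by
  have hmove {i j : V} (hij : i ≠ j) {x x' : C i} {y y' : C j}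
      (hA : H.Adj ⟨i, x'⟩ ⟨j, y'⟩) : H.Adj ⟨i, x⟩ ⟨j, y⟩ :=
    ((hA.of_neighborSet_union_eq (hN i x' x) (by simp [hij.symm])).symm.of_neighborSet_union_eq
      (hN j y' y) (by simp [hij])).symm
  refine ⟨fromRel fun i j => ∃ x y, H.Adj ⟨i, x⟩ ⟨j, y⟩, ?_⟩
  ext ⟨i, x⟩ ⟨j, y⟩
  change H.Adj _ _ ↔ (fromRel _).Adj i j ∨ (i = j ∧ _)
  rw [fromRel_adj]
  constructor
  · intro hA
    by_cases hij : i = j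
    · exact Or.inr ⟨hij, hA.ne⟩
    · exact Or.inl ⟨hij, Or.inl ⟨x, y, hA⟩⟩
  · rintro (⟨hij, ⟨x', y', hA⟩ | ⟨y', x', hA⟩⟩ | ⟨rfl, hne⟩)
    · exact hmove hij hA
    · exact (hmove (Ne.symm hij) hA).symm
    · have hx : (⟨i, x⟩ : Σ i, C i) ∈ H.neighborSet ⟨i, y⟩ ∪ {⟨i, y⟩} :=
        hN i y x ▸ Or.inr rfl
      exact (hx.resolve_right hne).symm

theorem stmt_10_general {V : Type*} (G : SimpleGraph V)
    (C : V → Type*)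
    (H' : SimpleGraph (Σ i, C i))
    (h : MinimalChordalCompletion (blowup G C) H') :
    (∀ (i : V) (x y : C i),
        H'.neighborSet ⟨i, x⟩ ∪ {⟨i, x⟩} = H'.neighborSet ⟨i, y⟩ ∪ {⟨i, y⟩}) ∧
    ∃ G'' : SimpleGraph V, H' = blowup G'' C := by
  have hN (i : V) (x y : C i) :
      H'.neighborSet ⟨i, x⟩ ∪ {⟨i, x⟩} = H'.neighborSet ⟨i, y⟩ ∪ {⟨i, y⟩} :=
    (h.blowup_neighborSet_union_subset i x y).antisymm (h.blowup_neighborSet_union_subset i y x)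
  exact ⟨hN, exists_eq_blowup_of_neighborSet_union_eq hN⟩

theorem stmt_10 {V : Type*} [Fintype V] (G : SimpleGraph V)
    (C : V → Type*) [∀ i, Nonempty (C i)] [∀ i, Fintype (C i)]
    (H' : SimpleGraph (Σ i, C i))
    (h : MinimalChordalCompletion (blowup G C) H') :
    (∀ (i : V) (x y : C i),
        H'.neighborSet ⟨i, x⟩ ∪ {⟨i, x⟩} = H'.neighborSet ⟨i, y⟩ ∪ {⟨i, y⟩}) ∧
    ∃ G'' : SimpleGraph V, H' = blowup G'' C :=
  stmt_10_general G C H' h
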